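/- The iterated-logarithm recursion depth is bounded: if r(N) = ⌈(log₂ N)²⌉ and N ≥ 2^16, then starting from N and repeatedly applying r, the number of steps needed to get below 2^16 is at most 2·log*(N), where log*(N) = min{i ≥ 0 : log₂^{(i)}(N) ≤ 1}. -/

import Mathlib

/-!
Compare everything with the tower of twos `tower 0 = 1`, `tower (n + 1) = 2 ^ tower n`.
If `tower m ≤ N` then the first `m` iterated logarithms of `N` are at least `2`, so
`m ≤ log* N`; hence `N < tower (log* N + 1)`. On the other hand `r` maps numbers below
`2 ^ 2 ^ t` to at most `(2 ^ t) ^ 2 = 2 ^ (2 t)`, and a second application gives at most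
`(2 t) ^ 2 < 2 ^ t`: two steps of `r` lower the tower height by one. From height
`log* N + 1` down to height `4` (i.e. below `2 ^ 16`) this takes at most `2 log* N` steps.
-/

/-- The `i`-fold iterated base-2 logarithm. -/
noncomputable def iterLog : ℕ → ℝ → ℝ
  | 0, x => x
  | (i + 1), x => Real.logb 2 (iterLog i x)

/-- The iterated logarithm `log*`. -/
noncomputable def logStar (N : ℕ) : ℕ := sInf {i : ℕ | iterLog i (N : ℝ) ≤ 1}

/-- The recursion-size function `r(N) = ⌈(log₂ N)²⌉`. -/
noncomputable def rfun (N : ℕ) : ℕ := ⌈(Real.logb 2 N) ^ 2⌉₊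

def tower : ℕ → ℕ
  | 0 => 1
  | n + 1 => 2 ^ tower n

lemma tower_succ (n : ℕ) : tower (n + 1) = 2 ^ tower n := rfl

lemma tower_strictMono : StrictMono tower :=
  strictMono_nat_of_lt_succ fun _ => Nat.lt_two_pow_self

lemma le_tower (n : ℕ) : n ≤ tower n := tower_strictMono.id_le n

lemma tower_pos : (n : ℕ) → 0 < tower n
  | 0 => Nat.one_pos
  | _ + 1 => Nat.two_pow_pos _

lemma one_lt_tower {n : ℕ} (hn : n ≠ 0) : 1 < tower n := by
  simpa [tower] using tower_strictMono (Nat.pos_of_ne_zero hn)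

lemma logb_two_tower_succ (n : ℕ) : Real.logb 2 (tower (n + 1) : ℝ) = tower n := by
  rw [tower_succ, Nat.cast_pow, Real.logb_pow, Nat.cast_ofNat,
    Real.logb_self_eq_one one_lt_two, mul_one]

lemma iterLog_eq_iterate (i : ℕ) : iterLog i = (Real.logb 2)^[i] := by
  induction i with
  | zero => rfl
  | succ i ih => funext x; rw [Function.iterate_succ_apply', ← ih]; rfl

lemma iterLog_succ' (i : ℕ) (x : ℝ) : iterLog (i + 1) x = iterLog i (Real.logb 2 x) := by
  simp only [iterLog_eq_iterate, Function.iterate_succ_apply]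

lemma tower_sub_le_iterLog {x : ℝ} {m i : ℕ} (hx : (tower m : ℝ) ≤ x) (hi : i ≤ m) :
    (tower (m - i) : ℝ) ≤ iterLog i x := by
  induction i with
  | zero => simpa [iterLog] using hx
  | succ i ih =>
    have hlog := ih (by omega)
    rw [show m - i = m - (i + 1) + 1 by omega] at hlog
    calc (tower (m - (i + 1)) : ℝ) = Real.logb 2 (tower (m - (i + 1) + 1)) :=
          (logb_two_tower_succ _).symm
      _ ≤ Real.logb 2 (iterLog i x) :=
          Real.logb_le_logb_of_le one_lt_two (by exact_mod_cast tower_pos _) hlog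

lemma exists_iterLog_le_one_of_le_tower (m : ℕ) {x : ℝ} (hx : 0 < x) (hxm : x ≤ tower m) :
    ∃ i, iterLog i x ≤ 1 := by
  induction m generalizing x with
  | zero => exact ⟨0, by simpa [iterLog, tower] using hxm⟩
  | succ m ih =>
    rcases le_or_gt x 1 with hx1 | hx1
    · exact ⟨0, hx1⟩
    have hlog : Real.logb 2 x ≤ tower m := by
      rw [← logb_two_tower_succ]
      exact Real.logb_le_logb_of_le one_lt_two hx hxm
    obtain ⟨i, hi⟩ := ih (Real.logb_pos one_lt_two hx1) hlog
    exact ⟨i + 1, by rwa [iterLog_succ']⟩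

lemma exists_iterLog_le_one {x : ℝ} (hx : 0 < x) : ∃ i, iterLog i x ≤ 1 :=
  exists_iterLog_le_one_of_le_tower ⌈x⌉₊ hx
    ((Nat.le_ceil x).trans (by exact_mod_cast le_tower _))

lemma le_logStar {N m : ℕ} (h : tower m ≤ N) : m ≤ logStar N := by
  have hN : (0 : ℝ) < N := by exact_mod_cast (tower_pos m).trans_le h
  refine le_csInf (exists_iterLog_le_one hN) fun i (hi : iterLog i (N : ℝ) ≤ 1) => ?_
  by_contra! him
  have htower : (1 : ℝ) < tower (m - i) := by exact_mod_cast one_lt_tower (by omega)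
  linarith [tower_sub_le_iterLog (x := N) (by exact_mod_cast h) him.le]

lemma lt_tower_logStar_succ (N : ℕ) : N < tower (logStar N + 1) :=
  lt_of_not_ge fun h => (le_logStar h).not_gt (Nat.lt_succ_self _)

lemma rfun_le_sq_of_le_two_pow {M n : ℕ} (h : M ≤ 2 ^ n) : rfun M ≤ n ^ 2 := by
  have hlog : Real.logb 2 M ≤ n := by
    rcases M.eq_zero_or_pos with rfl | hM
    · simp
    · rw [Real.logb_le_iff_le_rpow one_lt_two (by exact_mod_cast hM), Real.rpow_natCast]
      exact_mod_cast h
  have hlog_nonneg : 0 ≤ Real.logb 2 M := by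
    rcases M.eq_zero_or_pos with rfl | hM
    · simp
    · exact Real.logb_nonneg one_lt_two (by exact_mod_cast hM)
  rw [rfun, Nat.ceil_le]
  exact_mod_cast pow_le_pow_left₀ hlog_nonneg hlog 2

lemma rfun_rfun_le {M t : ℕ} (h : M ≤ 2 ^ 2 ^ t) : rfun (rfun M) ≤ (2 * t) ^ 2 := by
  refine rfun_le_sq_of_le_two_pow ((rfun_le_sq_of_le_two_pow h).trans_eq ?_)
  rw [← pow_mul, mul_comm]

lemma sq_two_mul_lt_two_pow {t : ℕ} (ht : 9 ≤ t) : (2 * t) ^ 2 < 2 ^ t := by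
  induction t, ht using Nat.le_induction with
  | base => norm_num
  | succ t ht ih =>
    calc (2 * (t + 1)) ^ 2 ≤ 2 * (2 * t) ^ 2 := by nlinarith
      _ < 2 * 2 ^ t := by omega
      _ = 2 ^ (t + 1) := by ring

lemma exists_iterate_rfun_lt (j : ℕ) {M : ℕ} (hM : M < tower (j + 1)) :
    ∃ k ≤ 2 * j, rfun^[k] M < 2 ^ 16 := by
  induction j generalizing M with
  | zero => exact ⟨0, le_rfl, hM.trans_le (by decide)⟩
  | succ j ih =>
    rcases lt_or_ge j 3 with hj | hj
    · refine ⟨0, Nat.zero_le _, hM.trans_le ?_⟩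
      exact (tower_strictMono.monotone (show j + 1 + 1 ≤ 4 by omega)).trans_eq (by decide)
    have h16 : 16 ≤ tower j := (tower_strictMono.monotone hj).trans_eq' (by decide)
    have hdrop : rfun (rfun M) < tower (j + 1) := by
      refine (rfun_rfun_le (t := tower j) hM.le).trans_lt ?_
      exact sq_two_mul_lt_two_pow (by omega)
    obtain ⟨k, hk, hk_lt⟩ := ih hdrop
    exact ⟨k + 2, by omega, by rwa [Function.iterate_add_apply]⟩

theorem stmt_6_general (N : ℕ) :
    ∃ k ≤ 2 * logStar N, rfun^[k] N < 2 ^ 16 :=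
  exists_iterate_rfun_lt _ (lt_tower_logStar_succ N)

theorem stmt_6 (N : ℕ) (hN : 2 ^ 16 ≤ N) :
    ∃ k ≤ 2 * logStar N, rfun^[k] N < 2 ^ 16 :=
  stmt_6_general N
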